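/- arXiv:2101.02574 — 7 statements merged into one kernel-verified Lean document; each statement's English description precedes it below -/
import Mathlib

section
/- Let H be a directed graph and P = p_1 p_2 ... p_ℓ a simple directed path in H. For a vertex u, let first(u) denote the earliest vertex of P (with respect to the order along P) reachable from u in H, and for a vertex v let last(v) denote the latest vertex of P from which v is reachable in H. Then there exists a directed u→v walk in H passing through some vertex of P if and only if both first(u) and last(v) exist and first(u) precedes or equals last(v) in the order along P. -/
/-!
A walk through `P` visits some `p_k`, so `u` reaches `p_k` and `p_k` reaches `v`; the path
vertices reachable from `u`, resp. reaching `v`, then form nonempty finite sets whose least and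
greatest elements are `first(u) ⪯ p_k ⪯ last(v)`. Conversely, `u ⇝ first(u) ⇝ last(v) ⇝ v`,
the middle part along `P`, is a walk through `P`.
-/

/-- A (directed) walk in digraph `G` from `a` to `b`, given as its list of vertices. -/
def DiWalk {V : Type*} (G : V → V → Prop) (a b : V) (l : List V) : Prop :=
  List.Chain' G l ∧ l.head? = some a ∧ l.getLast? = some b

open Relation

section

variable {V : Type*} {H : V → V → Prop}

theorem List.IsChain.pairwise_reflTransGen {l : List V} (h : l.IsChain H) :
    l.Pairwise (ReflTransGen H) :=
  (h.imp fun _ _ => .single).pairwise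

theorem List.IsChain.reflTransGen_get_of_le {l : List V} (h : l.IsChain H)
    {i j : Fin l.length} (hij : i ≤ j) : ReflTransGen H (l.get i) (l.get j) := by
  rcases hij.eq_or_lt with rfl | hlt
  · rfl
  · exact List.pairwise_iff_get.mp h.pairwise_reflTransGen i j hlt

namespace DiWalk

variable {a b c w : V} {l : List V}

theorem cons (e : H a c) (h : DiWalk H c b l) : DiWalk H a b (a :: l) := by
  obtain ⟨hl, hc, hb⟩ := h
  obtain ⟨t, rfl⟩ := List.head?_eq_some_iff.mp hc
  exact ⟨hl.cons_cons e, rfl, by simpa using hb⟩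

theorem head_mem (h : DiWalk H a b l) : a ∈ l :=
  List.mem_of_mem_head? h.2.1

theorem reflTransGen_of_mem (h : DiWalk H a b l) (hw : w ∈ l) :
    ReflTransGen H a w ∧ ReflTransGen H w b := by
  have hpw := h.1.pairwise_reflTransGen
  constructor
  · obtain ⟨t, rfl⟩ := List.head?_eq_some_iff.mp h.2.1
    rcases List.mem_cons.mp hw with rfl | hwt
    · rfl
    · exact List.rel_of_pairwise_cons hpw hwt
  · obtain ⟨s, rfl⟩ := List.getLast?_eq_some_iff.mp h.2.2
    rcases List.mem_append.mp hw with hws | hwb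
    · exact (List.pairwise_append.mp hpw).2.2 w hws b (List.mem_singleton_self b)
    · rw [List.mem_singleton.mp hwb]

end DiWalk

theorem exists_diWalk_of_reflTransGen {a b : V} (h : ReflTransGen H a b) :
    ∃ l, DiWalk H a b l := by
  induction h using ReflTransGen.head_induction_on with
  | refl => exact ⟨[b], List.isChain_singleton b, rfl, rfl⟩
  | head e _ ih =>
    obtain ⟨l, hl⟩ := ih
    exact ⟨_, hl.cons e⟩

theorem exists_diWalk_mem_iff {a b w : V} :
    (∃ l, DiWalk H a b l ∧ w ∈ l) ↔ ReflTransGen H a w ∧ ReflTransGen H w b := by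
  refine ⟨fun ⟨l, hl, hw⟩ => hl.reflTransGen_of_mem hw, ?_⟩
  rintro ⟨haw, hwb⟩
  induction haw using ReflTransGen.head_induction_on with
  | refl =>
    obtain ⟨l, hl⟩ := exists_diWalk_of_reflTransGen hwb
    exact ⟨l, hl, hl.head_mem⟩
  | head e _ ih =>
    obtain ⟨l, hl, hw⟩ := ih
    exact ⟨_, hl.cons e, List.mem_cons_of_mem _ hw⟩

theorem exists_diWalk_through_iff {a b : V} {p : List V} :
    (∃ l, DiWalk H a b l ∧ ∃ w ∈ l, w ∈ p) ↔
      ∃ k : Fin p.length, ReflTransGen H a (p.get k) ∧ ReflTransGen H (p.get k) b := by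
  constructor
  · rintro ⟨l, hl, w, hwl, hwp⟩
    obtain ⟨k, rfl⟩ := List.mem_iff_get.mp hwp
    exact ⟨k, exists_diWalk_mem_iff.mp ⟨l, hl, hwl⟩⟩
  · rintro ⟨k, hk⟩
    obtain ⟨l, hl, hkl⟩ := exists_diWalk_mem_iff.mpr hk
    exact ⟨l, hl, p.get k, hkl, List.get_mem p k⟩

theorem exists_isLeast_isGreatest_of_exists_and {α : Type*} [LinearOrder α] [Finite α]
    {S T : α → Prop} (h : ∃ k, S k ∧ T k) :
    ∃ i j, IsLeast {x | S x} i ∧ IsGreatest {x | T x} j ∧ i ≤ j := by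
  obtain ⟨k, hSk, hTk⟩ := h
  obtain ⟨i, hi, hmin⟩ := Set.exists_min_image {x | S x} id (Set.toFinite _) ⟨k, hSk⟩
  obtain ⟨j, hj, hmax⟩ := Set.exists_max_image {x | T x} id (Set.toFinite _) ⟨k, hTk⟩
  exact ⟨i, j, ⟨hi, hmin⟩, ⟨hj, hmax⟩, (hmin k hSk).trans (hmax k hTk)⟩

end

theorem stmt_0_general {V : Type*} (H : V → V → Prop) (p : List V)
    (hchain : List.Chain' H p) (u v : V) :
    (∃ l : List V, DiWalk H u v l ∧ ∃ w ∈ l, w ∈ p) ↔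
    (∃ i j : Fin p.length,
      Relation.ReflTransGen H u (p.get i) ∧
      (∀ i' : Fin p.length, Relation.ReflTransGen H u (p.get i') → i ≤ i') ∧
      Relation.ReflTransGen H (p.get j) v ∧
      (∀ j' : Fin p.length, Relation.ReflTransGen H (p.get j') v → j' ≤ j) ∧
      (i : ℕ) ≤ (j : ℕ)) := by
  rw [exists_diWalk_through_iff]
  constructor
  · intro h
    obtain ⟨i, j, ⟨hui, hmin⟩, ⟨hjv, hmax⟩, hij⟩ := exists_isLeast_isGreatest_of_exists_and h
    exact ⟨i, j, hui, fun _ h => hmin h, hjv, fun _ h => hmax h, hij⟩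
  · rintro ⟨i, j, hui, -, hjv, -, hij⟩
    exact ⟨i, hui, (hchain.reflTransGen_get_of_le hij).trans hjv⟩

/-- a `u → v` walk in `H` passes through the simple directed path `p`
iff `first(u)` and `last(v)` exist and `first(u)` precedes or equals `last(v)`
in the order along `p`. -/
theorem stmt_0 {V : Type*} (H : V → V → Prop) (p : List V)
    (hchain : List.Chain' H p) (hnodup : p.Nodup) (u v : V) :
    (∃ l : List V, DiWalk H u v l ∧ ∃ w ∈ l, w ∈ p) ↔
    (∃ i j : Fin p.length,
      Relation.ReflTransGen H u (p.get i) ∧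
      (∀ i' : Fin p.length, Relation.ReflTransGen H u (p.get i') → i ≤ i') ∧
      Relation.ReflTransGen H (p.get j) v ∧
      (∀ j' : Fin p.length, Relation.ReflTransGen H (p.get j') v → j' ≤ j) ∧
      (i : ℕ) ≤ (j : ℕ)) :=
  stmt_0_general H p hchain u v
end

section
/- Let G be a flow graph with start vertex s (every vertex reachable from s), and let D be its dominator tree. Let v ≠ s be a vertex and let w be any vertex that is not a descendant of v in D. Then every simple directed path in G from w to any descendant of v in D contains v. -/
/-- `a` dominates `b` in the flow graph `(G, s)`: every walk from `s` to `b` contains `a`. -/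
def Dom {V : Type*} (G : V → V → Prop) (s a b : V) : Prop :=
  ∀ l, DiWalk G s b l → a ∈ l

theorem DiWalk.append {V : Type*} {G : V → V → Prop} {a b c : V} {l₁ l₂ : List V}
    (h₁ : DiWalk G a b l₁) (h₂ : DiWalk G b c l₂) : DiWalk G a c (l₁ ++ l₂.tail) := by
  obtain ⟨hc₁, hh₁, hl₁⟩ := h₁
  obtain ⟨p, rfl⟩ := List.getLast?_eq_some_iff.mp hl₁
  obtain ⟨hc₂, hh₂, hl₂⟩ := h₂
  obtain ⟨t, rfl⟩ := List.head?_eq_some_iff.mp hh₂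
  refine ⟨?_, ?_, ?_⟩
  · rw [List.tail_cons, List.append_assoc, List.singleton_append]
    exact List.isChain_split.mpr ⟨hc₁, hc₂⟩
  · cases p <;> simpa using hh₁
  · simpa [List.getLast?_cons] using hl₂

theorem stmt_2_general {V : Type*} (G : V → V → Prop) (s : V)
    (v w : V) (hw : ¬ Dom G s v w)
    (w' : V) (hw' : Dom G s v w')
    (l : List V) (hl : DiWalk G w w' l) :
    v ∈ l := by
  obtain ⟨l₀, hl₀, hv₀⟩ : ∃ l₀, DiWalk G s w l₀ ∧ v ∉ l₀ := by simpa [Dom] using hw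
  rcases List.mem_append.mp (hw' _ (hl₀.append hl)) with h | h
  · exact absurd h hv₀
  · exact List.mem_of_mem_tail h

/-- in a flow graph with start vertex `s`, if `v ≠ s` and `w` is not a
descendant of `v` in the dominator tree (i.e. `v` does not dominate `w`), then every
simple directed path from `w` to any descendant `w'` of `v` (i.e. any `w'` dominated
by `v`) contains `v`. -/
theorem stmt_2 {V : Type*} (G : V → V → Prop) (s : V)
    (hflow : ∀ v, ∃ l, DiWalk G s v l)
    (v w : V) (hv : v ≠ s) (hw : ¬ Dom G s v w)
    (w' : V) (hw' : Dom G s v w')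
    (l : List V) (hl : DiWalk G w w' l) (hsimple : l.Nodup) :
    v ∈ l :=
  stmt_2_general G s v w hw w' hw' l hl
end

section
/- Let G be a directed graph, P a simple directed path in G, and x a vertex not on P. Define last_{G−x}(v) as the latest vertex of P (in path order) that can reach v in G−x, and last*_{G−x}(v) as the latest vertex of P that can reach v in G−x via a satellite path (a path whose internal vertices avoid P; for v on P set last*_{G−x}(v)=v). Then, whenever last*_{G−x}(v) exists, last_{G−x}(v) equals the latest vertex of P lying in the strongly connected component of last*_{G−x}(v) in G−x. -/
/-- The graph `G` with the vertex `x` removed (induced subgraph `G − x`). -/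
def Del {V : Type*} (G : V → V → Prop) (x : V) : V → V → Prop :=
  fun a b => G a b ∧ a ≠ x ∧ b ≠ x

/-- `Sat G p a b`: there is a satellite walk (internal vertices avoiding `p`)
from `a` to `b` in `G`. -/
def Sat {V : Type*} (G : V → V → Prop) (p : List V) (a b : V) : Prop :=
  ∃ l, DiWalk G a b l ∧ ∀ w ∈ l.tail.dropLast, w ∉ p

/-!
Let `j*` index `last*(v)`. Every vertex `p_j` of `P` reaching `v` also reaches `p_{j*}`: cut a
walk from `p_j` to `v` at its last vertex `p_k` on `P`; the rest is a satellite walk, so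
`k ≤ j*` and `p_k` reaches `p_{j*}` along `P`. If moreover `j ≥ j*`, then `p_{j*}` reaches `p_j`
along `P`, so `p_j` lies in the strongly connected component of `p_{j*}`. Hence the latest vertex
of `P` reaching `v` is the latest vertex of that component.
-/

section

variable {V : Type*} {R : V → V → Prop} {p : List V}

lemma DiWalk.reflTransGen {a b : V} {l : List V} (h : DiWalk R a b l) :
    Relation.ReflTransGen R a b := by
  obtain ⟨hc, hh, hl⟩ := h
  cases l with
  | nil => simp at hh
  | cons c t =>
    cases hh
    exact List.relationReflTransGen_of_exists_isChain_cons t hc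
      (by simpa [List.getLast?_eq_some_getLast] using hl)

lemma Sat.reflTransGen {a b : V} (h : Sat R p a b) : Relation.ReflTransGen R a b :=
  h.choose_spec.1.reflTransGen

lemma Sat.refl (p : List V) (a : V) : Sat R p a a :=
  ⟨[a], ⟨List.isChain_singleton a, rfl, rfl⟩, by simp⟩

lemma Sat.head {a b c : V} (hab : R a b) (hb : b ∉ p) (h : Sat R p b c) : Sat R p a c := by
  obtain ⟨_ | ⟨d, t⟩, ⟨hc, hh, hl⟩, hint⟩ := h
  · simp at hh
  cases hh
  refine ⟨a :: b :: t, ⟨List.isChain_cons_cons.2 ⟨hab, hc⟩, rfl, by simpa using hl⟩, ?_⟩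
  cases t with
  | nil => simp
  | cons d t =>
    simp only [List.tail_cons, List.dropLast_cons_cons, List.mem_cons, forall_eq_or_imp]
    exact ⟨hb, hint⟩

lemma Relation.ReflTransGen.sat_or_exists_sat {a c : V} (h : Relation.ReflTransGen R a c) :
    Sat R p a c ∨ ∃ k : Fin p.length,
      Relation.ReflTransGen R a (p.get k) ∧ Sat R p (p.get k) c := by
  induction h using Relation.ReflTransGen.head_induction_on with
  | refl => exact .inl (Sat.refl p c)
  | @head a b hab _ ih =>
    rcases ih with hs | ⟨k, hbk, hkc⟩
    · by_cases hb : b ∈ p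
      · obtain ⟨k, rfl⟩ := List.mem_iff_get.1 hb
        exact .inr ⟨k, .single hab, hs⟩
      · exact .inl (hs.head hab hb)
    · exact .inr ⟨k, .head hab hbk, hkc⟩

lemma List.IsChain.reflTransGen_get (hp : p.IsChain R) {i j : Fin p.length} (hij : i ≤ j) :
    Relation.ReflTransGen R (p.get i) (p.get j) := by
  obtain ⟨j, hj⟩ := j
  simp only [List.get_eq_getElem]
  induction j, (show i.val ≤ j from hij) using Nat.le_induction with
  | base => rfl
  | succ k _ ih => exact (ih (by omega) (by simpa)).tail (List.isChain_iff_getElem.1 hp k hj)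

lemma List.IsChain.del {G : V → V → Prop} {x : V} (hp : p.IsChain G) (hx : x ∉ p) :
    p.IsChain (Del G x) :=
  hp.imp_of_mem_imp fun _ _ ha hb hab =>
    ⟨hab, ne_of_mem_of_not_mem ha hx, ne_of_mem_of_not_mem hb hx⟩

lemma List.IsChain.reflTransGen_get_lastSat (hp : p.IsChain R) {v : V} {jstar : Fin p.length}
    (hcase1 : v ∈ p → p.get jstar = v)
    (hcase2 : v ∉ p → ∀ j : Fin p.length, Sat R p (p.get j) v → j ≤ jstar)
    {j : Fin p.length} (hj : Relation.ReflTransGen R (p.get j) v) :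
    Relation.ReflTransGen R (p.get j) (p.get jstar) := by
  by_cases hv : v ∈ p
  · rwa [hcase1 hv]
  rcases hj.sat_or_exists_sat with hs | ⟨k, hjk, hkv⟩
  · exact hp.reflTransGen_get (hcase2 hv j hs)
  · exact hjk.trans (hp.reflTransGen_get (hcase2 hv k hkv))

end

theorem stmt_5_general {V : Type*} (G : V → V → Prop) (p : List V)
    (hchain : List.Chain' G p) (x : V) (hx : x ∉ p) (v : V)
    (jstar : Fin p.length)
    (hcase1 : v ∈ p → p.get jstar = v)
    (hcase2 : v ∉ p → Sat (Del G x) p (p.get jstar) v ∧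
      ∀ j : Fin p.length, Sat (Del G x) p (p.get j) v → j ≤ jstar) :
    ∃ jm : Fin p.length,
      (Relation.ReflTransGen (Del G x) (p.get jm) (p.get jstar) ∧
       Relation.ReflTransGen (Del G x) (p.get jstar) (p.get jm)) ∧
      (∀ j : Fin p.length,
        (Relation.ReflTransGen (Del G x) (p.get j) (p.get jstar) ∧
         Relation.ReflTransGen (Del G x) (p.get jstar) (p.get j)) → j ≤ jm) ∧
      Relation.ReflTransGen (Del G x) (p.get jm) v ∧
      (∀ j : Fin p.length, Relation.ReflTransGen (Del G x) (p.get j) v → j ≤ jm) := by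
  classical
  have hp := hchain.del hx
  obtain ⟨jm, hjm, hmax⟩ := (Finset.univ.filter fun j =>
      Relation.ReflTransGen (Del G x) (p.get j) (p.get jstar) ∧
      Relation.ReflTransGen (Del G x) (p.get jstar) (p.get j)).exists_max_image id
    ⟨jstar, Finset.mem_filter.2 ⟨Finset.mem_univ _, .refl, .refl⟩⟩
  simp only [Finset.mem_filter, Finset.mem_univ, true_and, id] at hjm hmax
  have hstar_v : Relation.ReflTransGen (Del G x) (p.get jstar) v := by
    by_cases hv : v ∈ p
    · rw [hcase1 hv]
    · exact (hcase2 hv).1.reflTransGen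
  refine ⟨jm, hjm, hmax, hjm.1.trans hstar_v, fun j hj => ?_⟩
  rcases le_total j jstar with hle | hle
  · exact hle.trans (hmax jstar ⟨.refl, .refl⟩)
  · exact hmax j ⟨hp.reflTransGen_get_lastSat hcase1 (fun hv => (hcase2 hv).2) hj,
      hp.reflTransGen_get hle⟩

/-- with `x ∉ V(P)`, whenever `last*₍G−x₎(v)` exists (given here as
`p.get jstar`, the latest vertex of `P` with a satellite path to `v` in `G − x`,
with `last* v = v` for `v` on `P`), the latest vertex of `P` that can reach `v`
in `G − x` exists and equals the latest vertex of `P` lying in the strongly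
connected component of `last*₍G−x₎(v)` in `G − x`. -/
theorem stmt_5 {V : Type*} (G : V → V → Prop) (p : List V)
    (hchain : List.Chain' G p) (hnodup : p.Nodup) (x : V) (hx : x ∉ p) (v : V)
    (jstar : Fin p.length)
    (hcase1 : v ∈ p → p.get jstar = v)
    (hcase2 : v ∉ p → Sat (Del G x) p (p.get jstar) v ∧
      ∀ j : Fin p.length, Sat (Del G x) p (p.get j) v → j ≤ jstar) :
    ∃ jm : Fin p.length,
      (Relation.ReflTransGen (Del G x) (p.get jm) (p.get jstar) ∧
       Relation.ReflTransGen (Del G x) (p.get jstar) (p.get jm)) ∧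
      (∀ j : Fin p.length,
        (Relation.ReflTransGen (Del G x) (p.get j) (p.get jstar) ∧
         Relation.ReflTransGen (Del G x) (p.get jstar) (p.get j)) → j ≤ jm) ∧
      Relation.ReflTransGen (Del G x) (p.get jm) v ∧
      (∀ j : Fin p.length, Relation.ReflTransGen (Del G x) (p.get j) v → j ≤ jm) :=
  stmt_5_general G p hchain x hx v jstar hcase1 hcase2
end

section
/- Let G be a directed graph, P a simple directed path in G with vertex order ≺, and u, v vertices such that first*(u) (the earliest vertex of P reachable from u by a satellite path) and last*(v) (the latest vertex of P reaching v by a satellite path) exist and are not strongly connected in G. If Q is any u→v path in G that meets P, with enter(Q) the first vertex of Q on P and leave(Q) the last vertex of Q on P, then it cannot simultaneously hold that last*(v) ≺ enter(Q) and leave(Q) ≺ first*(u). -/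
section

variable {V : Type*} {G : V → V → Prop}

namespace List.IsChain

theorem reflTransGen_get_of_le_s8 {l : List V} (h : IsChain G l) {i j : Fin l.length}
    (hij : i ≤ j) : Relation.ReflTransGen G (l.get i) (l.get j) := by
  rcases hij.lt_or_eq with hlt | rfl
  · exact pairwise_iff_get.mp (h.imp fun _ _ => .single).pairwise i j hlt
  · exact .refl

theorem reflTransGen_of_mem_append_cons {r₁ r₂ : List V} {a b : V}
    (h : IsChain G (r₁ ++ a :: r₂)) (hb : b ∈ r₁ ++ a :: r₂) (hbr₁ : b ∉ r₁) :
    Relation.ReflTransGen G a b := by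
  have hpair := (h.right_of_append.imp fun _ _ => Relation.ReflTransGen.single).pairwise
  rcases mem_cons.mp ((mem_append.mp hb).resolve_left hbr₁) with rfl | hbr₂
  · exact .refl
  · exact rel_of_pairwise_cons hpair hbr₂

end List.IsChain

namespace DiWalk

variable {p : List V} {u v : V}

theorem sat_prefix {r₁ r₂ : List V} {a : V} (hq : DiWalk G u v (r₁ ++ a :: r₂))
    (hr₁ : ∀ w ∈ r₁, w ∉ p) : Sat G p u a := by
  refine ⟨r₁ ++ [a], ⟨hq.1.prefix ⟨r₂, by simp⟩, ?_, by simp⟩, ?_⟩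
  · simpa [List.head?_append] using hq.2.1
  · rcases r₁ with _ | ⟨x, r₁⟩
    · simp
    · simpa using fun w hw => hr₁ w (List.mem_cons_of_mem x hw)

theorem sat_suffix {s₁ s₂ : List V} {b : V} (hq : DiWalk G u v (s₁ ++ b :: s₂))
    (hs₂ : ∀ w ∈ s₂, w ∉ p) : Sat G p b v := by
  refine ⟨b :: s₂, ⟨hq.1.suffix ⟨s₁, rfl⟩, rfl, ?_⟩, ?_⟩
  · simpa [List.getLast?_append] using hq.2.2
  · simpa using fun w hw => hs₂ w (List.mem_of_mem_dropLast hw)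

end DiWalk

end

theorem stmt_8_general {V : Type*} (G : V → V → Prop) (p : List V)
    (hchain : List.Chain' G p) (u v : V)
    (i j ie ile : Fin p.length)
    (hi2 : ∀ i' : Fin p.length, Sat G p u (p.get i') → i ≤ i')
    (hj2 : ∀ j' : Fin p.length, Sat G p (p.get j') v → j' ≤ j)
    (hnsc : ¬ (Relation.ReflTransGen G (p.get i) (p.get j) ∧
               Relation.ReflTransGen G (p.get j) (p.get i)))
    (q : List V) (hq : DiWalk G u v q)
    (henter : ∃ r1 r2, q = r1 ++ (p.get ie) :: r2 ∧ ∀ w ∈ r1, w ∉ p)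
    (hleave : ∃ s1 s2, q = s1 ++ (p.get ile) :: s2 ∧ ∀ w ∈ s2, w ∉ p) :
    ¬ ((j : ℕ) < (ie : ℕ) ∧ (ile : ℕ) < (i : ℕ)) := by
  rintro ⟨hj_ie, hile_i⟩
  obtain ⟨r₁, r₂, rfl, hr₁⟩ := henter
  obtain ⟨s₁, s₂, hqs, hs₂⟩ := hleave
  have hi_ie : i ≤ ie := hi2 ie (hq.sat_prefix hr₁)
  have hile_j : ile ≤ j := hj2 ile ((hqs ▸ hq).sat_suffix hs₂)
  have henter_leave : Relation.ReflTransGen G (p.get ie) (p.get ile) :=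
    hq.1.reflTransGen_of_mem_append_cons (hqs ▸ List.mem_append_cons_self)
      fun h => hr₁ _ h (List.get_mem p ile)
  exact hnsc
    ⟨(hchain.reflTransGen_get_of_le_s8 hi_ie).trans
        (henter_leave.trans (hchain.reflTransGen_get_of_le_s8 hile_j)),
      (hchain.reflTransGen_get_of_le_s8 hj_ie.le).trans
        (henter_leave.trans (hchain.reflTransGen_get_of_le_s8 hile_i.le))⟩

/-- with `first*(u) = p.get i` and `last*(v) = p.get j` not strongly
connected in `G`, and `Q` a `u → v` path meeting `P` with `enter(Q) = p.get ie`
(its first vertex on `P`) and `leave(Q) = p.get ile` (its last vertex on `P`),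
it cannot hold simultaneously that `last*(v) ≺ enter(Q)` and `leave(Q) ≺ first*(u)`. -/
theorem stmt_8 {V : Type*} (G : V → V → Prop) (p : List V)
    (hchain : List.Chain' G p) (hnodup : p.Nodup) (u v : V)
    (i j ie ile : Fin p.length)
    (hi1 : Sat G p u (p.get i))
    (hi2 : ∀ i' : Fin p.length, Sat G p u (p.get i') → i ≤ i')
    (hj1 : Sat G p (p.get j) v)
    (hj2 : ∀ j' : Fin p.length, Sat G p (p.get j') v → j' ≤ j)
    (hnsc : ¬ (Relation.ReflTransGen G (p.get i) (p.get j) ∧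
               Relation.ReflTransGen G (p.get j) (p.get i)))
    (q : List V) (hq : DiWalk G u v q)
    (henter : ∃ r1 r2, q = r1 ++ (p.get ie) :: r2 ∧ ∀ w ∈ r1, w ∉ p)
    (hleave : ∃ s1 s2, q = s1 ++ (p.get ile) :: s2 ∧ ∀ w ∈ s2, w ∉ p) :
    ¬ ((j : ℕ) < (ie : ℕ) ∧ (ile : ℕ) < (i : ℕ)) :=
  stmt_8_general G p hchain u v i j ie ile hi2 hj2 hnsc q hq henter hleave
end

section
/- Let G be a directed graph, P a simple directed path in G, and partition V(G)∖V(P) into layers L_ℓ, ..., L_1 where L_i consists of vertices reachable from p_i by a satellite path but not contained in any L_j with j > i. Then every edge of G from a vertex of layer L_j to a vertex of layer L_i satisfies j ≤ i (there is no edge from a higher-numbered layer to a strictly lower-numbered layer). -/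
/-- The `i`-th layer: vertices off `p` reachable from `p.get i` by a satellite path
but not reachable from any later `p.get j` (`j > i`) by a satellite path
(this closed form is equivalent to the greedy definition `L_i = {reachable from p_i} ∖ ⋃_{j>i} L_j`). -/
def Layer {V : Type*} (G : V → V → Prop) (p : List V) (i : Fin p.length) : Set V :=
  {w | w ∉ p ∧ Sat G p (p.get i) w ∧
    ∀ j : Fin p.length, (i : ℕ) < (j : ℕ) → ¬ Sat G p (p.get j) w}

theorem List.mem_dropLast_or_eq_of_getLast?_eq {α : Type*} {l : List α} {x y : α}
    (hy : l.getLast? = some y) (hx : x ∈ l) : x ∈ l.dropLast ∨ x = y := by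
  rw [← dropLast_append_getLast? y hy] at hx
  simpa using hx

theorem List.getLast?_tail_eq_of_mem {α : Type*} {l : List α} {x y : α}
    (hy : l.getLast? = some y) (hx : x ∈ l.tail) : l.tail.getLast? = some y := by
  rw [getLast?_tail, if_neg, hy]
  rintro h
  obtain ⟨u, rfl⟩ := length_eq_one_iff.mp h
  simp at hx

theorem DiWalk.concat {V : Type*} {G : V → V → Prop} {a b c : V} {l : List V}
    (h : DiWalk G a b l) (hbc : G b c) : DiWalk G a c (l ++ [c]) := by
  obtain ⟨hchain, hhead, hlast⟩ := h
  refine ⟨hchain.append (List.isChain_singleton c) ?_, ?_, List.getLast?_concat⟩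
  · simp [hlast, hbc]
  · simp [List.head?_append, hhead]

theorem Sat.extend {V : Type*} {G : V → V → Prop} {p : List V} {a w z : V}
    (h : Sat G p a w) (hwp : w ∉ p) (hedge : G w z) : Sat G p a z := by
  obtain ⟨l, hwalk, hint⟩ := h
  have hl : l ≠ [] := by rintro rfl; simp [DiWalk] at hwalk
  refine ⟨l ++ [z], hwalk.concat hedge, fun x hx => ?_⟩
  rw [List.tail_append_of_ne_nil hl, List.dropLast_concat] at hx
  rcases List.mem_dropLast_or_eq_of_getLast?_eq (List.getLast?_tail_eq_of_mem hwalk.2.2 hx) hx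
    with hx | rfl
  · exact hint x hx
  · exact hwp

theorem stmt_11_general {V : Type*} (G : V → V → Prop) (p : List V)
    (i j : Fin p.length) (w z : V)
    (hw : w ∈ Layer G p j) (hz : z ∈ Layer G p i) (hedge : G w z) :
    (j : ℕ) ≤ (i : ℕ) :=
  Nat.le_of_not_lt fun hij => hz.2.2 j hij (hw.2.1.extend hw.1 hedge)

/-- every edge of `G` from a vertex of layer `L_j` to a vertex of
layer `L_i` satisfies `j ≤ i`. -/
theorem stmt_11 {V : Type*} (G : V → V → Prop) (p : List V)
    (hchain : List.Chain' G p) (hnodup : p.Nodup)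
    (i j : Fin p.length) (w z : V)
    (hw : w ∈ Layer G p j) (hz : z ∈ Layer G p i) (hedge : G w z) :
    (j : ℕ) ≤ (i : ℕ) :=
  stmt_11_general G p i j w z hw hz hedge
end

section
/- Let G be a strongly connected directed graph, T a DFS tree of G rooted at s, and H the loop nesting forest of G with respect to T. Then every directed cycle C of G is contained in a single loop: there is a vertex u ∈ C such that u is an ancestor in T of all vertices of C, and every vertex of C belongs to loop(u). -/
/-- Ancestor relation of the rooted tree given by the parent function `par`
with root `s`: `Anc par s a b` iff `a` is a (weak) ancestor of `b`. -/
def Anc {V : Type*} (par : V → V) (s : V) : V → V → Prop :=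
  Relation.ReflTransGen (fun a b => b ≠ s ∧ par b = a)

/-- `loop(u)` with respect to the DFS tree `par` of `G`: descendants `x` of `u`
having a directed walk to `u` in `G` using only descendants of `u`. -/
def Loop {V : Type*} (G : V → V → Prop) (par : V → V) (s u : V) : Set V :=
  {x | Anc par s u x ∧ ∃ l, DiWalk G x u l ∧ ∀ y ∈ l, Anc par s u y}

/-!
Take `u` on the cycle with the least preorder number. Every edge `x → y` of `G` with `x` below
`u` and `num u ≤ num y` stays below `u`: a tree or forward edge goes down, and a back or cross
edge lands on a vertex numbered between `num u` and `num x`, which the interval property of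
preorder numbers places in the subtree of `u`. Walking around the cycle from `u` therefore never
leaves that subtree, and the arc of the cycle from any vertex back to `u` witnesses membership in
`loop(u)`.
-/

section DFSTree

variable {V : Type*} {G : V → V → Prop} {par : V → V} {s : V} {num : V → ℕ}

theorem anc_of_anc_of_edge
    (hanc_num : ∀ a b, Anc par s a b → num a ≤ num b)
    (hinterval : ∀ a b c, Anc par s a b → num a ≤ num c → num c ≤ num b → Anc par s a c)
    (hdfs : ∀ a b, G a b → Anc par s a b ∨ Anc par s b a ∨ num b < num a)
    {u x y : V} (hux : Anc par s u x) (hxy : G x y) (hy : num u ≤ num y) : Anc par s u y := by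
  rcases hdfs x y hxy with hxy | hyx | hlt
  · exact hux.trans hxy
  · exact hinterval u x y hux hy (hanc_num y x hyx)
  · exact hinterval u x y hux hy hlt.le

theorem anc_of_diWalk
    (hanc_num : ∀ a b, Anc par s a b → num a ≤ num b)
    (hinterval : ∀ a b c, Anc par s a b → num a ≤ num c → num c ≤ num b → Anc par s a c)
    (hdfs : ∀ a b, G a b → Anc par s a b ∨ Anc par s b a ∨ num b < num a)
    {u w : V} {l : List V} (hl : DiWalk G u w l) (hnum : ∀ y ∈ l, num u ≤ num y) :
    ∀ y ∈ l, Anc par s u y := by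
  obtain ⟨hchain, hhead, -⟩ := hl
  obtain ⟨m, rfl⟩ := List.head?_eq_some_iff.mp hhead
  have hchain' : (u :: m).IsChain (fun x y => G x y ∧ num u ≤ num y) :=
    hchain.imp_of_mem_imp fun _ y _ hy hxy => ⟨hxy, hnum y hy⟩
  rintro y (_ | ⟨_, hy⟩)
  · exact .refl
  · exact hchain'.cons_induction _ _
      (fun _ _ ⟨hxy, hy⟩ hx => anc_of_anc_of_edge hanc_num hinterval hdfs hx hxy hy) .refl y hy

end DFSTree

theorem List.IsChain.append_self_of_cycle {α : Type*} {R : α → α → Prop} {c : List α}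
    (hne : c ≠ []) (hcyc : (c ++ [c.head hne]).IsChain R) : (c ++ c).IsChain R := by
  have hc : c.IsChain R := hcyc.left_of_append
  have hback : R (c.getLast hne) (c.head hne) := hcyc.rel_getLast_head_of_append hne (by simp)
  refine hc.append hc fun x hx y hy => ?_
  rw [List.getLast?_eq_some_getLast hne, Option.mem_some_iff] at hx
  rw [List.head?_eq_some_head hne, Option.mem_some_iff] at hy
  exact hx ▸ hy ▸ hback

theorem exists_diWalk_of_mem_cycle {V : Type*} {G : V → V → Prop} {c : List V} (hne : c ≠ [])
    (hcyc : (c ++ [c.head hne]).IsChain G) {v w : V} (hv : v ∈ c) (hw : w ∈ c) :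
    ∃ l, DiWalk G v w l ∧ ∀ y ∈ l, y ∈ c := by
  obtain ⟨a, b, hab⟩ := List.append_of_mem hv
  obtain ⟨a', b', hab'⟩ := List.append_of_mem hw
  have hinfix : v :: b ++ a' ++ [w] <:+: c ++ c :=
    ⟨a, b', by nth_rw 1 [hab]; nth_rw 1 [hab']; simp⟩
  refine ⟨v :: b ++ a' ++ [w], ⟨(hcyc.append_self_of_cycle hne).infix hinfix, by simp,
    List.getLast?_concat⟩, fun y hy => ?_⟩
  simpa using hinfix.subset hy

theorem stmt_12_general {V : Type*} (G : V → V → Prop) (par : V → V) (s : V) (num : V → ℕ)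
    (hanc_num : ∀ a b, Anc par s a b → num a ≤ num b)
    (hinterval : ∀ a b c, Anc par s a b → num a ≤ num c → num c ≤ num b →
      Anc par s a c)
    (hdfs : ∀ a b, G a b → Anc par s a b ∨ Anc par s b a ∨ num b < num a)
    (c : List V) (hne : c ≠ []) (hcyc : List.Chain' G (c ++ [c.head hne])) :
    ∃ u ∈ c, (∀ w ∈ c, Anc par s u w) ∧ ∀ w ∈ c, w ∈ Loop G par s u := by
  obtain ⟨u, hu, hmin⟩ :=
    Set.exists_min_image {w | w ∈ c} num c.finite_toSet ⟨_, List.head_mem hne⟩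
  have hdesc : ∀ w ∈ c, Anc par s u w := by
    intro w hw
    obtain ⟨l, hl, hlc⟩ := exists_diWalk_of_mem_cycle hne hcyc hu hw
    exact anc_of_diWalk hanc_num hinterval hdfs hl (fun y hy => hmin y (hlc y hy)) w
      (List.mem_of_getLast? hl.2.2)
  refine ⟨u, hu, hdesc, fun w hw => ⟨hdesc w hw, ?_⟩⟩
  obtain ⟨l, hl, hlc⟩ := exists_diWalk_of_mem_cycle hne hcyc hw hu
  exact ⟨l, hl, fun y hy => hdesc y (hlc y hy)⟩

/-- let `T` (given by `par`, rooted at `s`, with preorder numbering `num`,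
satisfying the standard DFS-tree properties of `G`) be a DFS tree of the strongly
connected digraph `G`. Then every directed cycle `c` of `G` is contained in a single
loop: there is `u ∈ c` which is a `T`-ancestor of all vertices of `c`, and every
vertex of `c` belongs to `loop(u)`. -/
theorem stmt_12 {V : Type*} (G : V → V → Prop) (par : V → V) (s : V) (num : V → ℕ)
    (hsc : ∀ a b : V, Relation.ReflTransGen G a b)
    (hroot : par s = s)
    (htree_edge : ∀ a, a ≠ s → G (par a) a)
    (hnum_inj : Function.Injective num)
    (hanc_num : ∀ a b, Anc par s a b → num a ≤ num b)
    (hinterval : ∀ a b c, Anc par s a b → num a ≤ num c → num c ≤ num b →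
      Anc par s a c)
    (hdfs : ∀ a b, G a b → Anc par s a b ∨ Anc par s b a ∨ num b < num a)
    (c : List V) (hne : c ≠ []) (hcyc : List.Chain' G (c ++ [c.head hne])) :
    ∃ u ∈ c, (∀ w ∈ c, Anc par s u w) ∧ ∀ w ∈ c, w ∈ Loop G par s u :=
  stmt_12_general G par s num hanc_num hinterval hdfs c hne hcyc
end

section
/- Let G be a directed graph, P = p_1...p_ℓ a simple directed path, and for each i let L_i be the i-th layer of V(G)∖V(P) (vertices reachable from p_i by a satellite path but not from any later p_j by a satellite path). Fix a vertex v with layer(v) = l and a failed vertex x ∉ V(P). If x is not in layer L_l, or x ∈ L_l but x is not an ancestor of v in the dominator tree D_l of G[L_l ∪ {p_l}] rooted at p_l, then the latest vertex of P having a satellite path to v in G−x equals the latest vertex of P having a satellite path to v in G (both equal p_l). -/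
/-- Dominance inside the induced subgraph `G[S]` with root `r`: every walk from `r`
to `b` all of whose vertices lie in `S` contains `a`. `DomIn G S r a b` says `a` is
an ancestor of `b` in the dominator tree of `G[S]` rooted at `r`. -/
def DomIn {V : Type*} (G : V → V → Prop) (S : Set V) (r a b : V) : Prop :=
  ∀ l, DiWalk G r b l → (∀ y ∈ l, y ∈ S) → a ∈ l

/-!
Every inner vertex `w` of a satellite path from `p_l` to `v ∈ L_l` lies in `L_l` itself: `w` is
off `P`, reachable from `p_l`, and a later `p_j` reaching `w` would reach `v` through `w`. Hence
such a path survives the deletion of any `x ∉ L_l ∪ V(P)`. If instead `x ∈ L_l` does not dominate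
`v`, some `p_l`–`v` walk inside `L_l ∪ {p_l}` avoids `x`; from its last visit to `p_l` on it is a
satellite path of `G − x`. Maximality of `p_l` passes from `G` to its subgraph `G − x`.
-/

section

variable {V : Type*} {G : V → V → Prop} {p : List V} {a b w x : V}

theorem List.IsChain.del_s15 {l : List V} (h : l.IsChain G) (hx : x ∉ l) : l.IsChain (Del G x) :=
  h.imp_of_mem_imp fun _ _ ha hb hab =>
    ⟨hab, fun h => hx (h ▸ ha), fun h => hx (h ▸ hb)⟩

theorem sat_iff_exists_isChain :
    Sat G p a b ↔ a = b ∨ ∃ m, (a :: (m ++ [b])).IsChain G ∧ ∀ u ∈ m, u ∉ p := by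
  constructor
  · rintro ⟨_ | ⟨c, t⟩, ⟨hc, hh, hl⟩, hint⟩
    · simp at hh
    obtain rfl : c = a := by simpa using hh
    rcases t.eq_nil_or_concat' with rfl | ⟨m, d, rfl⟩
    · exact .inl (by simpa using hl)
    · rw [← List.cons_append, List.getLast?_concat, Option.some_inj] at hl
      subst hl
      exact .inr ⟨m, hc, by simpa using hint⟩
  · rintro (rfl | ⟨m, hc, hm⟩)
    · exact ⟨[a], ⟨.singleton a, rfl, rfl⟩, by simp⟩
    · refine ⟨a :: (m ++ [b]), ⟨hc, rfl, ?_⟩, by simpa using hm⟩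
      rw [← List.cons_append, List.getLast?_concat]

namespace Sat

theorem mono {G' : V → V → Prop} (h : ∀ a b, G a b → G' a b) :
    Sat G p a b → Sat G' p a b
  | ⟨l, ⟨hc, hh, hl⟩, hint⟩ => ⟨l, ⟨hc.imp h, hh, hl⟩, hint⟩

theorem trans (hw : w ∉ p) (h₁ : Sat G p a w) (h₂ : Sat G p w b) : Sat G p a b := by
  rw [sat_iff_exists_isChain] at h₁ h₂ ⊢
  rcases h₁ with rfl | ⟨m₁, hc₁, hm₁⟩
  · exact h₂
  rcases h₂ with rfl | ⟨m₂, hc₂, hm₂⟩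
  · exact .inr ⟨m₁, hc₁, hm₁⟩
  refine .inr ⟨m₁ ++ w :: m₂, by simpa using List.isChain_cons_split.2 ⟨hc₁, hc₂⟩, ?_⟩
  simp only [List.mem_append, List.mem_cons]
  rintro u (hu | rfl | hu)
  exacts [hm₁ u hu, hw, hm₂ u hu]

end Sat

theorem sat_and_sat_of_mem_isChain {m : List V} (hc : (a :: (m ++ [b])).IsChain G)
    (hm : ∀ u ∈ m, u ∉ p) (hw : w ∈ m) : Sat G p a w ∧ Sat G p w b := by
  obtain ⟨m₁, m₂, rfl⟩ := List.append_of_mem hw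
  rw [List.append_assoc, List.cons_append, List.isChain_cons_split] at hc
  simp only [sat_iff_exists_isChain]
  exact ⟨.inr ⟨m₁, hc.1, fun u hu => hm u (by simp [hu])⟩,
    .inr ⟨m₂, hc.2, fun u hu => hm u (by simp [hu])⟩⟩

theorem le_of_mem_layer_of_sat {i j : Fin p.length} (hb : b ∈ Layer G p i)
    (hj : Sat G p (p.get j) b) : (j : ℕ) ≤ i :=
  not_lt.1 fun hij => hb.2.2 j hij hj

theorem mem_layer_of_mem_isChain {i : Fin p.length} {m : List V} (hb : b ∈ Layer G p i)
    (hc : (p.get i :: (m ++ [b])).IsChain G) (hm : ∀ u ∈ m, u ∉ p) (hw : w ∈ m) :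
    w ∈ Layer G p i := by
  obtain ⟨hiw, hwb⟩ := sat_and_sat_of_mem_isChain hc hm hw
  exact ⟨hm w hw, hiw, fun j hij hjw => hb.2.2 j hij (hjw.trans (hm w hw) hwb)⟩

theorem sat_del_of_notMem_layer {i : Fin p.length} (hb : b ∈ Layer G p i) (hxp : x ∉ p)
    (hx : x ∉ Layer G p i) : Sat (Del G x) p (p.get i) b := by
  rcases sat_iff_exists_isChain.1 hb.2.1 with h | ⟨m, hc, hm⟩
  · exact sat_iff_exists_isChain.2 (.inl h)
  refine sat_iff_exists_isChain.2 (.inr ⟨m, hc.del_s15 ?_, hm⟩)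
  simp only [List.mem_cons, List.mem_append, List.not_mem_nil, or_false, not_or]
  refine ⟨?_, fun h => hx (mem_layer_of_mem_isChain hb hc hm h), ?_⟩
  · rintro rfl
    exact hxp (p.get_mem i)
  · rintro rfl
    exact hx hb

theorem sat_of_diWalk_of_subset_insert {r : V} {T : Set V} (hT : ∀ u ∈ T, u ∉ p) {l : List V}
    (hl : DiWalk G a b l) (hS : ∀ y ∈ l, y ∈ insert r T) (hr : r ∈ l) : Sat G p r b := by
  induction l generalizing a with
  | nil => simp at hr
  | cons c t ih =>
    obtain ⟨hc, hh, hlast⟩ := hl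
    obtain rfl : c = a := by simpa using hh
    by_cases hrt : r ∈ t
    · obtain ⟨d, t', rfl⟩ := List.exists_cons_of_ne_nil (List.ne_nil_of_mem hrt)
      exact ih ⟨hc.tail, rfl, by simpa using hlast⟩ (fun y hy => hS y (.tail _ hy)) hrt
    · obtain rfl : r = c := by simpa [hrt] using hr
      refine ⟨r :: t, ⟨hc, hh, hlast⟩, fun y hy => hT y ?_⟩
      have hyt : y ∈ t := List.dropLast_subset t (by simpa using hy)
      simpa [ne_of_mem_of_not_mem hyt hrt] using hS y (.tail _ hyt)

theorem sat_del_of_not_domIn {r : V} {T : Set V} (hT : ∀ u ∈ T, u ∉ p)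
    (h : ¬ DomIn G (insert r T) r x b) : Sat (Del G x) p r b := by
  simp only [DomIn, not_forall] at h
  obtain ⟨l, ⟨hc, hh, hl⟩, hS, hx⟩ := h
  exact sat_of_diWalk_of_subset_insert hT ⟨hc.del_s15 hx, hh, hl⟩ hS (List.mem_of_mem_head? hh)

end

theorem stmt_15_general {V : Type*} (G : V → V → Prop) (p : List V)
    (x v : V) (hx : x ∉ p)
    (lv : Fin p.length) (hlayer : v ∈ Layer G p lv)
    (hcase : x ∉ Layer G p lv ∨
      (x ∈ Layer G p lv ∧
        ¬ DomIn G (insert (p.get lv) (Layer G p lv)) (p.get lv) x v)) :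
    (Sat (Del G x) p (p.get lv) v ∧
      ∀ j : Fin p.length, Sat (Del G x) p (p.get j) v → (j : ℕ) ≤ (lv : ℕ)) ∧
    (Sat G p (p.get lv) v ∧
      ∀ j : Fin p.length, Sat G p (p.get j) v → (j : ℕ) ≤ (lv : ℕ)) := by
  have hdel : Sat (Del G x) p (p.get lv) v := by
    rcases hcase with hxL | ⟨-, hdom⟩
    · exact sat_del_of_notMem_layer hlayer hx hxL
    · exact sat_del_of_not_domIn (fun u hu => hu.1) hdom
  exact ⟨⟨hdel, fun j hj => le_of_mem_layer_of_sat hlayer (hj.mono fun _ _ h => h.1)⟩,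
    hlayer.2.1, fun j => le_of_mem_layer_of_sat hlayer⟩

/-- for `v` in layer `L_l` and failed `x ∉ V(P)`, if `x ∉ L_l`, or
`x ∈ L_l` but `x` is not an ancestor of `v` in the dominator tree `D_l` of
`G[L_l ∪ {p_l}]` rooted at `p_l`, then the latest vertex of `P` with a satellite path
to `v` in `G − x` equals the latest vertex of `P` with a satellite path to `v` in `G`
(both being `p_l`). -/
theorem stmt_15 {V : Type*} (G : V → V → Prop) (p : List V)
    (hchain : List.Chain' G p) (hnodup : p.Nodup)
    (x v : V) (hx : x ∉ p) (hv : v ∉ p)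
    (lv : Fin p.length) (hlayer : v ∈ Layer G p lv)
    (hcase : x ∉ Layer G p lv ∨
      (x ∈ Layer G p lv ∧
        ¬ DomIn G (insert (p.get lv) (Layer G p lv)) (p.get lv) x v)) :
    (Sat (Del G x) p (p.get lv) v ∧
      ∀ j : Fin p.length, Sat (Del G x) p (p.get j) v → (j : ℕ) ≤ (lv : ℕ)) ∧
    (Sat G p (p.get lv) v ∧
      ∀ j : Fin p.length, Sat G p (p.get j) v → (j : ℕ) ≤ (lv : ℕ)) :=
  stmt_15_general G p x v hx lv hlayer hcase
end
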